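/- arXiv:2004.07123 — 4 statements merged into one kernel-verified Lean document; each statement's English description precedes it below -/
import Mathlib

section
/- Let (O, I, R) be a formal context and let X ⊆ I be a nonempty itemset. Then the conjunctive support of X is determined by the disjunctive supports of its nonempty subsets via inclusion–exclusion: Supp(X) = Σ_{∅ ≠ X' ⊆ X} (-1)^{|X'|-1} · Supp(∨X') (as an identity of integers). -/
open Finset

variable {O ι : Type*}

/-- The extent of an itemset `X`: objects possessing every item of `X`. -/
def extent [Fintype O] (R : O → ι → Prop) [∀ o i, Decidable (R o i)]
    (X : Finset ι) : Finset O :=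
  univ.filter fun o => ∀ i ∈ X, R o i

/-- The (conjunctive) support of an itemset `X`. -/
def supp [Fintype O] (R : O → ι → Prop) [∀ o i, Decidable (R o i)]
    (X : Finset ι) : ℕ :=
  (extent R X).card

/-- The disjunctive support of an itemset `X`. -/
def dsupp [Fintype O] (R : O → ι → Prop) [∀ o i, Decidable (R o i)]
    (X : Finset ι) : ℕ :=
  (univ.filter fun o => ∃ i ∈ X, R o i).card


lemma aux_sum {ι : Type*} [DecidableEq ι] (A : Finset ι) :
    ∑ X' ∈ A.powerset.filter (fun X' => X' ≠ ∅), (-1:ℤ)^(X'.card-1)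
      = if A = ∅ then 0 else 1 := by
  have h := Finset.sum_powerset_neg_one_pow_card (x := A)
  have hsplit : ∑ X' ∈ A.powerset, (-1:ℤ)^X'.card
      = 1 + ∑ X' ∈ A.powerset.filter (fun X' => X' ≠ ∅), (-1:ℤ)^X'.card := by
    rw [← Finset.sum_filter_add_sum_filter_not A.powerset (fun X' => X' = ∅)]
    congr 1
    have : A.powerset.filter (fun X' => X' = ∅) = {∅} := by
      ext Y; simp [Finset.mem_filter]
      intro h; simp [h]
    simp [this]
  have hneg : ∀ X' ∈ A.powerset.filter (fun X' => X' ≠ ∅),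
      (-1:ℤ)^(X'.card-1) = -(-1:ℤ)^X'.card := by
    intro X' hX'
    simp only [Finset.mem_filter] at hX'
    have hc : 1 ≤ X'.card := Finset.card_pos.mpr (Finset.nonempty_iff_ne_empty.mpr hX'.2)
    have h2 : (-1:ℤ)^X'.card = (-1:ℤ)^(X'.card - 1) * (-1) := by
      rw [← pow_succ]; congr 1; omega
    rw [h2]; ring
  have hsum : ∑ X' ∈ A.powerset.filter (fun X' => X' ≠ ∅), (-1:ℤ)^X'.card
      = (if A = ∅ then 1 else 0) - 1 := by
    rw [hsplit] at h; linarith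
  rw [Finset.sum_congr rfl hneg, Finset.sum_neg_distrib, hsum]
  split_ifs <;> ring

/-- Inclusion-exclusion: the conjunctive support of a nonempty itemset is determined
by the disjunctive supports of its nonempty subsets. -/
theorem supp_eq_alternating_sum_dsupp
    [Fintype O] [DecidableEq ι] (R : O → ι → Prop) [∀ o i, Decidable (R o i)]
    (X : Finset ι) (hX : X.Nonempty) :
    (supp R X : ℤ) =
      ∑ X' ∈ X.powerset.filter (fun X' => X' ≠ ∅),
        (-1 : ℤ) ^ (X'.card - 1) * (dsupp R X' : ℤ) := by
  have hd : ∀ X' : Finset ι, (dsupp R X' : ℤ) = ∑ o : O, if ∃ i ∈ X', R o i then (1:ℤ) else 0 := by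
    intro X'
    rw [dsupp, Finset.card_filter]
    push_cast
    rfl
  have hs : (supp R X : ℤ) = ∑ o : O, if ∀ i ∈ X, R o i then (1:ℤ) else 0 := by
    rw [supp, extent, Finset.card_filter]
    push_cast
    rfl
  simp_rw [hd, Finset.mul_sum]
  rw [Finset.sum_comm, hs]
  apply Finset.sum_congr rfl
  intro o _
  set T := X.filter (fun i => ¬ R o i) with hT
  have hTX : T ⊆ X := Finset.filter_subset _ _
  have key : ∀ X' ∈ X.powerset.filter (fun X' => X' ≠ ∅),
      (-1:ℤ)^(X'.card-1) * (if ∃ i ∈ X', R o i then (1:ℤ) else 0)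
      = (-1:ℤ)^(X'.card-1) - (-1:ℤ)^(X'.card-1) * (if X' ⊆ T then (1:ℤ) else 0) := by
    intro X' hX'
    simp only [Finset.mem_filter, Finset.mem_powerset] at hX'
    have hiff : (∃ i ∈ X', R o i) ↔ ¬ X' ⊆ T := by
      constructor
      · rintro ⟨i, hi, hR⟩ hsub
        have := hsub hi
        rw [hT, Finset.mem_filter] at this
        exact this.2 hR
      · intro hns
        by_contra hc
        push_neg at hc
        apply hns
        intro i hi
        rw [hT, Finset.mem_filter]
        exact ⟨hX'.1 hi, hc i hi⟩
    by_cases hsub : X' ⊆ T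
    · rw [if_neg (by rw [hiff]; simpa), if_pos hsub]; ring
    · rw [if_pos (hiff.mpr hsub), if_neg hsub]; ring
  rw [Finset.sum_congr rfl key, Finset.sum_sub_distrib, aux_sum X]
  have h2 : ∑ X' ∈ X.powerset.filter (fun X' => X' ≠ ∅),
      (-1:ℤ)^(X'.card-1) * (if X' ⊆ T then (1:ℤ) else 0)
      = ∑ X' ∈ T.powerset.filter (fun X' => X' ≠ ∅), (-1:ℤ)^(X'.card-1) := by
    simp_rw [mul_ite, mul_one, mul_zero]
    rw [← Finset.sum_filter]
    congr 1
    ext Y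
    simp only [Finset.mem_filter, Finset.mem_powerset]
    constructor
    · rintro ⟨⟨_, hne⟩, hsub⟩; exact ⟨hsub, hne⟩
    · rintro ⟨hsub, hne⟩; exact ⟨⟨hsub.trans hTX, hne⟩, hsub⟩
  rw [h2, aux_sum T]
  have hXne : X ≠ ∅ := Finset.nonempty_iff_ne_empty.mp hX
  have hTiff : (∀ i ∈ X, R o i) ↔ T = ∅ := by
    rw [hT, Finset.filter_eq_empty_iff]
    simp
  rw [if_neg hXne]
  by_cases hTe : T = ∅
  · rw [if_pos (hTiff.mpr hTe), if_pos hTe]; ring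
  · rw [if_neg (fun h => hTe (hTiff.mp h)), if_neg hTe]; ring
end

section
/- Let (O, I, R) be a formal context. The set of minimal generators forms an order ideal in the powerset of I ordered by inclusion: if P ⊆ Q ⊆ I and P is not a minimal generator, then Q is not a minimal generator; equivalently, every subset of a minimal generator is itself a minimal generator. -/
open Finset

variable {O ι : Type*}

/-- An itemset `G` is a minimal generator if no proper subset has the same support. -/
def IsMinGen [Fintype O] (R : O → ι → Prop) [∀ o i, Decidable (R o i)]
    (G : Finset ι) : Prop :=
  ∀ G' ⊂ G, supp R G' ≠ supp R G


/-- Minimal generators form an order ideal: any superset of a non-minimal-generator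
is not a minimal generator; equivalently every subset of a minimal generator is
itself a minimal generator. -/
theorem minGen_orderIdeal
    [Fintype O] (R : O → ι → Prop) [∀ o i, Decidable (R o i)] :
    (∀ P Q : Finset ι, P ⊆ Q → ¬ IsMinGen R P → ¬ IsMinGen R Q) ∧
    (∀ Q P : Finset ι, IsMinGen R Q → P ⊆ Q → IsMinGen R P) := by
  have hmem : ∀ (X : Finset ι) (o : O), o ∈ extent R X ↔ ∀ i ∈ X, R o i := by
    intro X o; simp [extent]
  have hanti : ∀ X Y : Finset ι, X ⊆ Y → extent R Y ⊆ extent R X := by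
    intro X Y hXY o ho
    rw [hmem] at ho ⊢
    exact fun i hi => ho i (hXY hi)
  have key : ∀ P Q : Finset ι, P ⊆ Q → ¬ IsMinGen R P → ¬ IsMinGen R Q := by
    intro P Q hPQ hP hQ
    classical
    simp only [IsMinGen, not_forall, not_ne_iff] at hP
    obtain ⟨P', hP'P, hsupp⟩ := hP
    -- extent R P' = extent R P
    have hext : extent R P' = extent R P := by
      apply (Finset.eq_of_subset_of_card_le (hanti _ _ hP'P.subset) _).symm
      exact le_of_eq hsupp
    set Q' := P' ∪ (Q \ P) with hQ'
    obtain ⟨x, hxP, hxP'⟩ := Finset.exists_of_ssubset hP'P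
    have hQ'Q : Q' ⊂ Q := by
      constructor
      · intro y hy
        rcases Finset.mem_union.mp hy with h | h
        · exact hPQ (hP'P.subset h)
        · exact (Finset.mem_sdiff.mp h).1
      · intro h
        have := h (hPQ hxP)
        rcases Finset.mem_union.mp this with h' | h'
        · exact hxP' h'
        · exact (Finset.mem_sdiff.mp h').2 hxP
    apply hQ Q' hQ'Q
    unfold supp
    congr 1
    apply Finset.Subset.antisymm
    · intro o ho
      rw [hmem] at ho ⊢
      intro i hi
      by_cases hiP : i ∈ P
      · have hoP : o ∈ extent R P := by
          rw [← hext, hmem]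
          exact fun j hj => ho j (Finset.mem_union_left _ hj)
        exact (hmem _ _).mp hoP i hiP
      · exact ho i (Finset.mem_union_right _ (Finset.mem_sdiff.mpr ⟨hi, hiP⟩))
    · exact hanti _ _ hQ'Q.subset
  refine ⟨key, fun Q P hQ hPQ => ?_⟩
  by_contra hP
  exact key P Q hPQ hP hQ
end

section
/- Let (O, I, R) be a formal context and let maxsupp ∈ ℕ. An itemset X ⊆ I is frequent (Supp(X) > maxsupp) if and only if no rare minimal generator is contained in X, i.e. for every minimal generator G with Supp(G) ≤ maxsupp one has G ⊄ X (G is not a subset of X). Hence the set of rare minimal generators determines, for every itemset, whether it is rare or frequent. -/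
open Finset

variable {O ι : Type*}

lemma supp_anti [Fintype O] (R : O → ι → Prop) [∀ o i, Decidable (R o i)]
    {X Y : Finset ι} (h : X ⊆ Y) : supp R Y ≤ supp R X := by
  apply Finset.card_le_card
  intro o ho
  simp only [extent, mem_filter] at *
  exact ⟨ho.1, fun i hi => ho.2 i (h hi)⟩

lemma exists_minGen [Fintype O] (R : O → ι → Prop) [∀ o i, Decidable (R o i)]
    (X : Finset ι) : ∃ G ⊆ X, supp R G = supp R X ∧ IsMinGen R G := by
  induction X using Finset.strongInduction with
  | _ X ih =>
    by_cases h : IsMinGen R X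
    · exact ⟨X, Finset.Subset.refl X, rfl, h⟩
    · simp only [IsMinGen, not_forall] at h
      obtain ⟨Y, hYX, hY⟩ := h
      rw [not_ne_iff] at hY
      obtain ⟨G, hGY, hG, hmin⟩ := ih Y hYX
      exact ⟨G, hGY.trans hYX.subset, hG.trans hY, hmin⟩

/-- An itemset is frequent iff it contains no rare minimal generator. -/
theorem frequent_iff_no_rare_minGen_subset
    [Fintype O] (R : O → ι → Prop) [∀ o i, Decidable (R o i)]
    (maxsupp : ℕ) (X : Finset ι) :
    maxsupp < supp R X ↔
      ∀ G : Finset ι, IsMinGen R G → supp R G ≤ maxsupp → ¬ G ⊆ X := by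
  constructor
  · intro h G _ hGle hGX
    exact absurd (lt_of_lt_of_le h (supp_anti R hGX)) (not_lt.mpr hGle)
  · intro h
    by_contra hle
    push_neg at hle
    obtain ⟨G, hGX, hG, hmin⟩ := exists_minGen R X
    exact h G hmin (hG ▸ hle) hGX
end

section
/- Let (O, I, R) be a formal context, h = f ∘ g, and minsupp ∈ ℕ. If X ⊆ I is a frequent itemset (Supp(X) ≥ minsupp), then h(X) is a closed frequent itemset with X ⊆ h(X) and Supp(h(X)) = Supp(X), and Supp(X) = max{Supp(C) : C closed, Supp(C) ≥ minsupp, X ⊆ C}. Hence the closed frequent itemsets equipped with their supports form an exact concise representation of the frequent itemsets. -/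
open Finset

variable {O ι : Type*}

/-- The intent of a set of objects `S`: items possessed by every object of `S`. -/
def intent [Fintype ι] (R : O → ι → Prop) [∀ o i, Decidable (R o i)]
    (S : Finset O) : Finset ι :=
  univ.filter fun i => ∀ o ∈ S, R o i

/-- The closure operator `h = f ∘ g` on itemsets. -/
def clos [Fintype O] [Fintype ι] (R : O → ι → Prop) [∀ o i, Decidable (R o i)]
    (X : Finset ι) : Finset ι :=
  intent R (extent R X)

lemma subset_clos [Fintype O] [Fintype ι] (R : O → ι → Prop) [∀ o i, Decidable (R o i)]
    (X : Finset ι) : X ⊆ clos R X := by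
  intro i hi
  simp only [clos, intent, extent, mem_filter, mem_univ, true_and]
  intro o ho
  exact ho i hi

lemma extent_anti [Fintype O] (R : O → ι → Prop) [∀ o i, Decidable (R o i)]
    {X Y : Finset ι} (h : X ⊆ Y) : extent R Y ⊆ extent R X := by
  intro o ho
  simp only [extent, mem_filter, mem_univ, true_and] at *
  exact fun i hi => ho i (h hi)

lemma extent_clos [Fintype O] [Fintype ι] (R : O → ι → Prop) [∀ o i, Decidable (R o i)]
    (X : Finset ι) : extent R (clos R X) = extent R X := by
  apply Finset.Subset.antisymm (extent_anti R (subset_clos R X))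
  intro o ho
  simp only [extent, mem_filter, mem_univ, true_and]
  intro i hi
  simp only [clos, intent, mem_filter, mem_univ, true_and] at hi
  exact hi o ho

lemma supp_clos [Fintype O] [Fintype ι] (R : O → ι → Prop) [∀ o i, Decidable (R o i)]
    (X : Finset ι) : supp R (clos R X) = supp R X := by
  simp [supp, extent_clos]

/-- Exact concise representation by closed frequent itemsets: the closure of a
frequent itemset is a closed frequent itemset containing it with the same support,
and this support is the maximum support of a closed frequent itemset containing it. -/
theorem closed_frequent_exact_representation
    [Fintype O] [Fintype ι] (R : O → ι → Prop) [∀ o i, Decidable (R o i)]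
    (minsupp : ℕ) (X : Finset ι) (hX : minsupp ≤ supp R X) :
    clos R (clos R X) = clos R X ∧
    minsupp ≤ supp R (clos R X) ∧
    X ⊆ clos R X ∧
    supp R (clos R X) = supp R X ∧
    IsGreatest {n : ℕ | ∃ C : Finset ι, clos R C = C ∧ minsupp ≤ supp R C ∧
      X ⊆ C ∧ n = supp R C} (supp R X) := by
  have hclos : clos R (clos R X) = clos R X := by
    show intent R (extent R (clos R X)) = clos R X
    rw [extent_clos]; rfl
  refine ⟨hclos, by rwa [supp_clos], subset_clos R X, supp_clos R X, ?_, ?_⟩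
  · exact ⟨clos R X, hclos, by rwa [supp_clos], subset_clos R X, (supp_clos R X).symm⟩
  · rintro n ⟨C, hC, hCs, hXC, rfl⟩
    exact Finset.card_le_card (extent_anti R hXC)
end
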